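/- Define the delayed-influence model P_δ on pairs of binary sequences of length 4: A₁,…,A₄ are i.i.d. uniform on {0,1}, B₁ is uniform on {0,1} independent of A, and for t ≥ 2, B_t = A_{t-1} with probability δ and otherwise B_t is uniform on {0,1} (independently). Then the expectation of c⁽¹⁾ under P_δ equals −(3/16)δ. -/

import Mathlib

/-! Condition on Alice's sequence `a` (indices from 0). Summing over `B₀`, which `Pdelta`
does not see, and over `B₃`, whose weights add up to one, the second factor of `c1` contributes
`2 - 1{a₀ ≠ a₃}`, which averages to `3/2` over `a₃`. The first factor is nonzero only when
`a₁ ≠ a₂`, and then its two indicators pin `(B₁, B₂)` to `(a₁, a₂)` resp. `(a₂, a₁)`, of weights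
`mix a₀ a₁ · (1 - δ)/2` resp. `mix a₀ a₂ · (1 + δ)/2`. Averaging over `a₀` replaces both `mix`
factors by `1/2`, so the expectation is `(3/4) · (1/2) · ((1 - δ)/4 - (1 + δ)/4) = -3δ/16`. -/

/-- The observable `c⁽¹⁾` of Ver Steeg–Galstyan:
`(1{A₂=B₂≠A₃=B₃} − 1{A₂=B₃≠A₃=B₂})·(1 − 1{A₁≠A₄}1{B₁≠B₄})` (1-based indices). -/
noncomputable def c1 (A B : Fin 4 → Bool) : ℝ :=
  ((if A 1 = B 1 ∧ B 1 ≠ A 2 ∧ A 2 = B 2 then (1:ℝ) else 0) -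
     (if A 1 = B 2 ∧ B 2 ≠ A 2 ∧ A 2 = B 1 then (1:ℝ) else 0)) *
  (1 - (if A 0 ≠ A 3 then (1:ℝ) else 0) * (if B 0 ≠ B 3 then (1:ℝ) else 0))


/-- One-step kernel of the delayed-influence model: `B_t` equals `a` (the
previous action of Alice) with probability `δ`, else uniform. -/
noncomputable def mix (δ : ℝ) (a b : Bool) : ℝ := δ * (if b = a then 1 else 0) + (1 - δ) / 2

/-- The delayed-influence model `P_δ` on pairs of length-4 binary sequences:
`A₁,…,A₄` i.i.d. uniform, `B₁` uniform, and for `t ≥ 2`, `B_t = A_{t-1}` with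
probability `δ`, else uniform. -/
noncomputable def Pdelta (δ : ℝ) (A B : Fin 4 → Bool) : ℝ :=
  (1/2)^5 * mix δ (A 0) (B 1) * mix δ (A 1) (B 2) * mix δ (A 2) (B 3)

theorem Fin.sum_tuple_cons {n : ℕ} {α : Fin (n + 1) → Type*} [∀ i, Fintype (α i)]
    {M : Type*} [AddCommMonoid M] (f : (∀ i, α i) → M) :
    ∑ x, f x = ∑ a : α 0, ∑ x : ∀ i : Fin n, α i.succ, f (Fin.cons a x) := by
  rw [← (Fin.consEquiv α).sum_comp, Fintype.sum_prod_type]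
  rfl

theorem Fin.sum_tuple_four {α M : Type*} [Fintype α] [AddCommMonoid M] (f : (Fin 4 → α) → M) :
    ∑ x, f x = ∑ a, ∑ b, ∑ c, ∑ d, f ![a, b, c, d] := by
  simp only [Fin.sum_tuple_cons, Fintype.sum_unique]
  rfl

theorem sum_Pdelta_mul_c1 (δ : ℝ) (a₀ a₁ a₂ a₃ : Bool) :
    ∑ B, Pdelta δ ![a₀, a₁, a₂, a₃] B * c1 ![a₀, a₁, a₂, a₃] B =
      (1 / 2) ^ 5 * (2 - if a₀ ≠ a₃ then 1 else 0) *
        (if a₁ ≠ a₂ then mix δ a₀ a₁ * mix δ a₁ a₂ - mix δ a₀ a₂ * mix δ a₁ a₁ else 0) := by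
  simp only [Fin.sum_tuple_four, Fintype.sum_bool, Pdelta, c1, mix, Matrix.cons_val_zero,
    Matrix.cons_val_one, Matrix.cons_val_two, Matrix.cons_val_three]
  cases a₀ <;> cases a₁ <;> cases a₂ <;> cases a₃ <;>
    simp +decide only [ite_true, ite_false] <;> ring

theorem c1_expectation_Pdelta_general (δ : ℝ) :
    ∑ A : Fin 4 → Bool, ∑ B : Fin 4 → Bool, Pdelta δ A B * c1 A B = -(3/16) * δ := by
  rw [Fin.sum_tuple_four]
  simp only [sum_Pdelta_mul_c1, Fintype.sum_bool, mix]
  simp +decide only [ite_true, ite_false]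
  ring

/-- Under the delayed-influence model `P_δ` the expectation of `c⁽¹⁾` equals
`−(3/16)δ`. -/
theorem c1_expectation_Pdelta (δ : ℝ) (hδ : δ ∈ Set.Icc (0:ℝ) 1) :
    ∑ A : Fin 4 → Bool, ∑ B : Fin 4 → Bool, Pdelta δ A B * c1 A B = -(3/16) * δ :=
  c1_expectation_Pdelta_general δ
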